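/- arXiv:2107.01717 — 7 statements merged into one kernel-verified Lean document; each statement's English description precedes it below -/
import Mathlib

section
/- Let C be a b-symbol code over F_q of length n with minimum b-distance d_b satisfying b ≤ d_b ≤ n. Then |C| ≤ q^{n - d_b + b}. -/
/-- The cyclic `b`-weight of `x : ZMod n → F`: the number of positions `i` whose
window `(x_i, x_{i+1}, …, x_{i+b-1})` (indices mod `n`) is nonzero. -/
noncomputable def wtb {F : Type*} [Zero F] {n : ℕ} (b : ℕ) (x : ZMod n → F) : ℕ :=
  Nat.card {i : ZMod n // ∃ j < b, x (i + (j : ZMod n)) ≠ 0}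

/-- Singleton bound for `b`-symbol codes: if every pair of distinct codewords of
`C` is at `b`-distance at least `db`, where `b ≤ db ≤ n` and `db` is attained,
then `|C| ≤ q^{n - db + b}`. -/
theorem b_symbol_singleton_bound
    {F : Type*} [Field F] [Fintype F] {n : ℕ} [NeZero n]
    (b db : ℕ) (C : Set (ZMod n → F))
    (hbd : b ≤ db) (hdn : db ≤ n)
    (hmin : ∀ x ∈ C, ∀ y ∈ C, x ≠ y → db ≤ wtb b (x - y))
    (hex : ∃ x ∈ C, ∃ y ∈ C, x ≠ y ∧ wtb b (x - y) = db) :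
    Nat.card C ≤ (Fintype.card F) ^ (n - db + b) := by
  classical
  set S : Finset (ZMod n) := (Finset.range (db - b)).image (Nat.cast : ℕ → ZMod n) with hS
  have hScard : S.card = db - b := by
    rw [hS, Finset.card_image_of_injOn, Finset.card_range]
    intro a ha a' ha' h
    simp only [Finset.coe_range, Set.mem_Iio] at ha ha'
    have hv : (a : ZMod n).val = (a' : ZMod n).val := by rw [h]
    rwa [ZMod.val_cast_of_lt (by omega), ZMod.val_cast_of_lt (by omega)] at hv
  -- the restriction map to the complement of S
  have hinj : Function.Injective
      (fun x : C => fun i : {i : ZMod n // i ∉ S} => (x : ZMod n → F) i.1) := by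
    rintro ⟨x, hx⟩ ⟨y, hy⟩ hxy
    simp only [Subtype.mk.injEq]
    by_contra hne
    set z := x - y with hz
    have hsupp : ∀ i, i ∉ S → z i = 0 := by
      intro i hi
      have := congrFun hxy ⟨i, hi⟩
      simpa [z, sub_eq_zero] using this
    have hz0 : ∃ i, z i ≠ 0 := by
      by_contra h
      push_neg at h
      exact hne (funext fun i => sub_eq_zero.mp (h i))
    obtain ⟨i0, hi0⟩ := hz0
    have hi0S : i0 ∈ S := by
      by_contra h; exact hi0 (hsupp i0 h)
    have hdbb : 0 < db - b := by
      rw [hS, Finset.mem_image] at hi0S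
      obtain ⟨k, hk, -⟩ := hi0S
      rw [Finset.mem_range] at hk
      omega
    have hwt : wtb b z ≤ db - 1 := by
      have hsub : {i : ZMod n | ∃ j < b, z (i + (j : ZMod n)) ≠ 0} ⊆
          ↑((Finset.range (db - 1)).image
            (fun m : ℕ => (m : ZMod n) - ((b - 1 : ℕ) : ZMod n))) := by
        intro i hi
        obtain ⟨j, hj, hzij⟩ := hi
        have hmem : i + (j : ZMod n) ∈ S := by
          by_contra h; exact hzij (hsupp _ h)
        rw [hS, Finset.mem_image] at hmem
        obtain ⟨k, hk, hkeq⟩ := hmem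
        rw [Finset.mem_range] at hk
        refine Finset.mem_coe.mpr (Finset.mem_image.mpr ⟨k + (b - 1) - j, ?_, ?_⟩)
        · rw [Finset.mem_range]; omega
        · rw [Nat.cast_sub (by omega : j ≤ k + (b - 1))]
          push_cast
          have hi' : i = (k : ZMod n) - (j : ZMod n) := eq_sub_of_add_eq hkeq.symm
          rw [hi']; ring
      have h1 : wtb b z =
          Set.ncard {i : ZMod n | ∃ j < b, z (i + (j : ZMod n)) ≠ 0} :=
        (Nat.card_coe_set_eq _).symm ▸ rfl
      rw [h1]
      calc Set.ncard {i : ZMod n | ∃ j < b, z (i + (j : ZMod n)) ≠ 0}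
          ≤ Set.ncard (↑((Finset.range (db - 1)).image
            (fun m : ℕ => (m : ZMod n) - ((b - 1 : ℕ) : ZMod n)))) :=
            Set.ncard_le_ncard hsub (Finset.finite_toSet _)
        _ = ((Finset.range (db - 1)).image
            (fun m : ℕ => (m : ZMod n) - ((b - 1 : ℕ) : ZMod n))).card :=
            Set.ncard_coe_finset _
        _ ≤ (Finset.range (db - 1)).card := Finset.card_image_le
        _ = db - 1 := Finset.card_range _
    have hge := hmin x hx y hy hne
    rw [← hz] at hge
    omega
  have hle : Nat.card C ≤ Nat.card ({i : ZMod n // i ∉ S} → F) :=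
    Nat.card_le_card_of_injective _ hinj
  have hcard : Nat.card ({i : ZMod n // i ∉ S} → F) =
      (Fintype.card F) ^ (n - db + b) := by
    rw [Nat.card_eq_fintype_card, Fintype.card_fun]
    congr 1
    have : Fintype.card {i : ZMod n // i ∉ S} = Fintype.card (ZMod n) - S.card := by
      rw [Fintype.card_subtype_compl, Fintype.card_coe]
    rw [this, ZMod.card, hScard]
    omega
  rw [hcard] at hle
  exact hle
end

section
/- Let c ∈ F_q^n be nonzero with b-shape (N_0, N_1, ..., N_{l+1}), with n_i = |N_i| and t = n_0 + n_{l+1}. If t ≥ b-1 and l = 1, then wt_b(c) = n - (t + 1 - b). -/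
/-- Partial sums of block sizes: `blockSum nsize i = n_0 + ⋯ + n_{i-1}`. -/
def blockSum (nsize : ℕ → ℕ) (i : ℕ) : ℕ := ∑ j ∈ Finset.range i, nsize j

/-- `c` has `b`-shape `(N_0, N_1, …, N_{l+1})`, where block `N_i` consists of the
(0-indexed) positions `[S i, S (i+1))` with `S = blockSum nsize`:
* the block sizes sum to `n`, and the internal blocks are nonempty;
* all coordinates of `c` in the leading block `N_0` and the trailing block
  `N_{l+1}` are zero;
* each odd-indexed block `N_i` (`1 ≤ i ≤ l`) starts and ends with a nonzero
  coordinate and its non-cyclic `(b-1)`-weight equals its length `n_i`, i.e.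
  every position in the block has a nonzero coordinate within its window of
  length `b-1` truncated at the end of the block;
* each even-indexed block `N_i` (`1 ≤ i ≤ l`) is a zero run of length `≥ b-1`. -/
def HasBShape {F : Type*} [Zero F] {n : ℕ} (b l : ℕ) (nsize : ℕ → ℕ)
    (c : ZMod n → F) : Prop :=
  blockSum nsize (l + 2) = n ∧
  (∀ i, 1 ≤ i → i ≤ l → 1 ≤ nsize i) ∧
  (∀ p, p < nsize 0 → c (p : ZMod n) = 0) ∧
  (∀ p, blockSum nsize (l + 1) ≤ p → p < n → c (p : ZMod n) = 0) ∧
  (∀ i, 1 ≤ i → i ≤ l → Odd i →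
    c ((blockSum nsize i : ℕ) : ZMod n) ≠ 0 ∧
    c ((blockSum nsize (i + 1) - 1 : ℕ) : ZMod n) ≠ 0 ∧
    (∀ p, blockSum nsize i ≤ p → p < blockSum nsize (i + 1) →
      ∃ j < b - 1, p + j < blockSum nsize (i + 1) ∧ c ((p + j : ℕ) : ZMod n) ≠ 0)) ∧
  (∀ i, 1 ≤ i → i ≤ l → Even i →
    b - 1 ≤ nsize i ∧
    ∀ p, blockSum nsize i ≤ p → p < blockSum nsize (i + 1) → c ((p : ℕ) : ZMod n) = 0)

/-! For `l = 1` the cyclic word `c` consists of the block `N_1` followed, cyclically, by the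
zero run `N_2 N_0` of length `t`. A window of length `b` starting in `N_1` meets a nonzero
coordinate by the window property of `N_1`, and one starting in the last `b - 1` positions of the
zero run reaches the first coordinate of `N_1`; the remaining `t + 1 - b` windows, at the start
of the zero run, are entirely zero. -/

open Finset

section ZeroRun

variable {F : Type*} [Zero F] {n : ℕ} [NeZero n]

open Classical in
theorem wtb_add_card_zeroWindows (b : ℕ) (x : ZMod n → F) :
    wtb b x + #(univ.filter fun i : ZMod n => ∀ j < b, x (i + j) = 0) = n := by
  have hwtb : wtb b x = #(univ.filter fun i : ZMod n => ∃ j < b, x (i + j) ≠ 0) := by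
    rw [wtb, Nat.card_eq_fintype_card, Fintype.card_subtype]
  have hsplit := card_filter_add_card_filter_not (s := (univ : Finset (ZMod n)))
    (p := fun i => ∃ j < b, x (i + j) ≠ 0)
  simp only [not_exists, not_and, not_not, card_univ, ZMod.card] at hsplit
  rw [hwtb]
  convert hsplit

theorem card_filter_eq_card_filter_range_natCast_add (s : ℕ) (P : ZMod n → Prop)
    [DecidablePred P] :
    #(univ.filter P) = #((range n).filter fun k => P ((s + k : ℕ) : ZMod n)) := by
  refine card_nbij' (fun i => (i - s).val) (fun k => ((s + k : ℕ) : ZMod n)) ?_ ?_ ?_ ?_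
  · intro i hi
    simp only [coe_filter, mem_univ, true_and, Set.mem_ofPred_eq, mem_range] at hi ⊢
    refine ⟨ZMod.val_lt _, ?_⟩
    simpa using hi
  · intro k hk
    simp only [coe_filter, mem_range, Set.mem_ofPred_eq, mem_univ, true_and] at hk ⊢
    exact hk.2
  · intro i _
    simp
  · intro k hk
    simp only [coe_filter, mem_range, Set.mem_ofPred_eq] at hk
    simp [ZMod.val_natCast_of_lt hk.1]

theorem wtb_eq_of_zeroRun {b : ℕ} {x : ZMod n → F} (s t : ℕ) (htn : t < n)
    (hzero : ∀ k < t, x ((s + k : ℕ) : ZMod n) = 0)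
    (hend : x ((s + t : ℕ) : ZMod n) ≠ 0)
    (hrest : ∀ k, t ≤ k → k < n → ∃ j < b, x ((s + k + j : ℕ) : ZMod n) ≠ 0) :
    wtb b x = n - (t + 1 - b) := by
  classical
  have hwindows : (range n).filter (fun k => ∀ j < b, x ((s + k : ℕ) + j) = 0)
      = range (t + 1 - b) := by
    ext k
    simp only [mem_filter, mem_range, ← Nat.cast_add]
    constructor
    · rintro ⟨hkn, hk⟩
      by_contra! hbk
      by_cases hkt : k < t
      · exact hend (by simpa [add_assoc, Nat.add_sub_cancel' hkt.le] using hk (t - k) (by omega))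
      · obtain ⟨j, hj, hne⟩ := hrest k (by omega) hkn
        exact hne (by simpa [add_assoc] using hk j hj)
    · intro hk
      exact ⟨by omega, fun j hj => by simpa [add_assoc] using hzero (k + j) (by omega)⟩
  have := wtb_add_card_zeroWindows b x
  rw [card_filter_eq_card_filter_range_natCast_add s, hwindows, card_range] at this
  omega

end ZeroRun

theorem wtb_of_bshape_case3_general
    {F : Type*} [Field F] {n : ℕ} [NeZero n] (b l : ℕ)
    (nsize : ℕ → ℕ) (c : ZMod n → F)
    (hshape : HasBShape b l nsize c)
    (hl : l = 1) :
    wtb b c = n - (nsize 0 + nsize (l + 1) + 1 - b) := by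
  subst hl
  obtain ⟨hsum, hpos, hlead, htrail, hodd, -⟩ := hshape
  obtain ⟨hstart, -, hwin⟩ := hodd 1 le_rfl le_rfl odd_one
  have hrun := hpos 1 le_rfl le_rfl
  simp only [blockSum, sum_range_succ, sum_range_zero, zero_add, Nat.reduceAdd]
    at hsum htrail hstart hwin ⊢
  have hwrap (p : ℕ) : c ((n + p : ℕ) : ZMod n) = c p := by simp
  refine wtb_eq_of_zeroRun (nsize 0 + nsize 1) (nsize 0 + nsize 2) (by omega) ?_ ?_ ?_
  · intro k hk
    rcases lt_or_ge k (nsize 2) with hk2 | hk2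
    · exact htrail _ (by omega) (by omega)
    · rw [show nsize 0 + nsize 1 + k = n + (k - nsize 2) by omega, hwrap]
      exact hlead _ (by omega)
  · rwa [show nsize 0 + nsize 1 + (nsize 0 + nsize 2) = n + nsize 0 by omega, hwrap]
  · intro k hk hkn
    obtain ⟨j, hj, -, hne⟩ := hwin (nsize 0 + (k - (nsize 0 + nsize 2))) (by omega) (by omega)
    refine ⟨j, by omega, ?_⟩
    rwa [show nsize 0 + nsize 1 + k + j = n + (nsize 0 + (k - (nsize 0 + nsize 2)) + j) by omega,
      hwrap]

/-- If `t = n_0 + n_{l+1} ≥ b - 1` and `l = 1`, then `wt_b(c) = n - (t + 1 - b)`. -/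
theorem wtb_of_bshape_case3
    {F : Type*} [Field F] {n : ℕ} [NeZero n] (b l : ℕ) (hb : 2 ≤ b)
    (nsize : ℕ → ℕ) (c : ZMod n → F) (hc : c ≠ 0)
    (hshape : HasBShape b l nsize c)
    (hl : l = 1) (ht : b - 1 ≤ nsize 0 + nsize (l + 1)) :
    wtb b c = n - (nsize 0 + nsize (l + 1) + 1 - b) :=
  wtb_of_bshape_case3_general b l nsize c hshape hl
end

section
/- Let c ∈ F_q^n be nonzero with b-shape (N_0, N_1, ..., N_{l+1}), with n_i = |N_i| and t = n_0 + n_{l+1}. If t ≥ b-1 and l ≥ 3 (l odd), then wt_b(c) = Σ_{i=1}^{(l+1)/2} n_{2i-1} + (l+1)(b-1)/2. -/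
/-!
Represent each cyclic position by an integer in the window `[n_0 - (b-1), n_0 - (b-1) + n)`.
There the length-`b` window at `x` meets the support of `c` exactly when `x` lies in
`[s - (b-1), e)` for a dense block `N_{2k+1} = [s, e)`: from below it reaches the nonzero first
entry of the block, and inside the block a nonzero entry lies within `b-1` steps. The zero runs of
length `≥ b-1` between dense blocks, and `t ≥ b-1` across the wrap-around, make these intervals
pairwise disjoint and keep them inside the window, so `wt_b(c) = ∑ₖ (n_{2k+1} + b - 1)`.
-/

open Finset

lemma Nat.exists_le_lt_succ_of_le_of_lt (S : ℕ → ℕ) {q N : ℕ} (h0 : S 0 ≤ q) (hN : q < S N) :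
    ∃ i < N, S i ≤ q ∧ q < S (i + 1) := by
  induction N with
  | zero => omega
  | succ N ih =>
    by_cases hq : q < S N
    · obtain ⟨i, hi, h⟩ := ih hq
      exact ⟨i, by omega, h⟩
    · exact ⟨N, by omega, by omega, hN⟩

namespace ZMod

variable {n : ℕ}

lemma eq_of_intCast_eq_of_abs_sub_lt {x y : ℤ} (h : (x : ZMod n) = y) (hxy : |x - y| < n) :
    x = y :=
  sub_eq_zero.1 <| Int.eq_zero_of_abs_lt_dvd ((intCast_eq_intCast_iff_dvd_sub y x n).1 h.symm) hxy

lemma exists_mem_Ico_intCast_eq [NeZero n] (a : ℤ) (i : ZMod n) :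
    ∃ x ∈ Set.Ico a (a + n), (x : ZMod n) = i :=
  ⟨a + (i - a).val, ⟨by omega, by have := (i - a).val_lt; omega⟩,
    by push_cast [natCast_zmod_val]; ring⟩

end ZMod

lemma blockSum_succ (nsize : ℕ → ℕ) (i : ℕ) :
    blockSum nsize (i + 1) = blockSum nsize i + nsize i :=
  sum_range_succ _ _

lemma blockSum_mono (nsize : ℕ → ℕ) : Monotone (blockSum nsize) :=
  fun _ _ h => sum_le_sum_of_subset (range_subset_range.2 h)

lemma blockSum_one (nsize : ℕ → ℕ) : blockSum nsize 1 = nsize 0 := by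
  simp [blockSum]

noncomputable def denseWindow (b : ℕ) (nsize : ℕ → ℕ) (k : ℕ) : Finset ℤ :=
  Ico ((blockSum nsize (2 * k + 1) : ℤ) - (b - 1 : ℕ)) (blockSum nsize (2 * k + 2))

lemma card_denseWindow (b : ℕ) (nsize : ℕ → ℕ) (k : ℕ) :
    (denseWindow b nsize k).card = nsize (2 * k + 1) + (b - 1) := by
  rw [denseWindow, Int.card_Ico, blockSum_succ nsize (2 * k + 1)]
  omega

namespace HasBShape

variable {F : Type*} [Zero F] {n b l : ℕ} {nsize : ℕ → ℕ} {c : ZMod n → F}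

lemma exists_dense_block_of_ne_zero (h : HasBShape b l nsize c) {q : ℕ} (hq : q < n)
    (hne : c q ≠ 0) :
    ∃ k < (l + 1) / 2, blockSum nsize (2 * k + 1) ≤ q ∧ q < blockSum nsize (2 * k + 2) := by
  obtain ⟨-, -, hhead, htail, -, heven⟩ := h
  have hq₀ : blockSum nsize 1 ≤ q := by
    by_contra! hlt
    exact hne (hhead q (blockSum_one nsize ▸ hlt))
  have hq₁ : q < blockSum nsize (l + 1) := by
    by_contra! hle
    exact hne (htail q hle hq)
  obtain ⟨i, hil, hi⟩ :=
    Nat.exists_le_lt_succ_of_le_of_lt (fun i => blockSum nsize (i + 1)) hq₀ hq₁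
  rcases Nat.even_or_odd (i + 1) with hev | ⟨k, hk⟩
  · exact absurd ((heven (i + 1) (by omega) (by omega) hev).2 q hi.1 hi.2) hne
  · exact ⟨k, by omega, hk ▸ hi.1, by convert hi.2 using 2; omega⟩

lemma blockSum_add_le_blockSum (h : HasBShape b l nsize c) {k k' : ℕ} (hkk' : k < k')
    (hk' : 2 * k' + 1 ≤ l) :
    blockSum nsize (2 * k + 2) + (b - 1) ≤ blockSum nsize (2 * k' + 1) := by
  have hgap := (h.2.2.2.2.2 (2 * k + 2) (by omega) (by omega) ⟨k + 1, by ring⟩).1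
  have := blockSum_mono nsize (show 2 * k + 3 ≤ 2 * k' + 1 by omega)
  rw [blockSum_succ nsize (2 * k + 2)] at this
  omega

lemma blockSum_add_le (h : HasBShape b l nsize c) (ht : b - 1 ≤ nsize 0 + nsize (l + 1))
    {i : ℕ} (hi : i ≤ l + 1) : blockSum nsize i + (b - 1) ≤ n + nsize 0 := by
  have htotal := h.1
  rw [blockSum_succ nsize (l + 1)] at htotal
  have := blockSum_mono nsize hi
  omega

lemma pairwiseDisjoint_denseWindow (h : HasBShape b l nsize c) :
    (range ((l + 1) / 2) : Set ℕ).PairwiseDisjoint (denseWindow b nsize) := by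
  intro k hk k' hk' hne
  simp only [coe_range, Set.mem_Iio] at hk hk'
  rw [Function.onFun, denseWindow, denseWindow, disjoint_left]
  intro x hx hx'
  rw [mem_Ico] at hx hx'
  rcases Nat.lt_or_gt_of_ne hne with hlt | hlt <;>
    have := h.blockSum_add_le_blockSum hlt (by omega) <;> omega

lemma exists_ne_zero_of_mem_denseWindow (h : HasBShape b l nsize c) {k : ℕ}
    (hk : k < (l + 1) / 2) {x : ℤ} (hx : x ∈ denseWindow b nsize k) :
    ∃ j < b, c ((x : ZMod n) + j) ≠ 0 := by
  obtain ⟨hstart, -, hdense⟩ := h.2.2.2.2.1 (2 * k + 1) (by omega) (by omega) ⟨k, rfl⟩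
  rw [show 2 * k + 1 + 1 = 2 * k + 2 by ring] at hdense
  rw [denseWindow, mem_Ico] at hx
  by_cases hxs : x < blockSum nsize (2 * k + 1)
  · refine ⟨(blockSum nsize (2 * k + 1) - x).toNat, by omega, ?_⟩
    have hcast : ((blockSum nsize (2 * k + 1) - x).toNat : ℤ) = blockSum nsize (2 * k + 1) - x :=
      Int.toNat_of_nonneg (by omega)
    rw [← Int.cast_natCast, hcast]
    simpa using hstart
  · lift x to ℕ using by omega
    obtain ⟨j, hjb, -, hne⟩ := hdense x (by omega) (by omega)
    exact ⟨j, by omega, by simpa using hne⟩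

lemma mem_Ico_of_mem_denseWindow (h : HasBShape b l nsize c)
    (ht : b - 1 ≤ nsize 0 + nsize (l + 1)) {k : ℕ} (hk : k < (l + 1) / 2) {x : ℤ}
    (hx : x ∈ denseWindow b nsize k) :
    x ∈ Set.Ico ((nsize 0 : ℤ) - (b - 1 : ℕ)) ((nsize 0 : ℤ) - (b - 1 : ℕ) + n) := by
  rw [denseWindow, mem_Ico] at hx
  rw [Set.mem_Ico]
  have hfirst := blockSum_one nsize ▸ blockSum_mono nsize (show 1 ≤ 2 * k + 1 by omega)
  have hlast := h.blockSum_add_le ht (show 2 * k + 2 ≤ l + 1 by omega)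
  omega

lemma exists_mem_denseWindow_of_ne_zero [NeZero n] (h : HasBShape b l nsize c)
    (ht : b - 1 ≤ nsize 0 + nsize (l + 1)) {x : ℤ}
    (hx : x ∈ Set.Ico ((nsize 0 : ℤ) - (b - 1 : ℕ)) ((nsize 0 : ℤ) - (b - 1 : ℕ) + n))
    {j : ℕ} (hj : j < b) (hne : c ((x : ZMod n) + j) ≠ 0) :
    ∃ k < (l + 1) / 2, x ∈ denseWindow b nsize k := by
  obtain ⟨hx₀, hx₁⟩ := hx
  set q := ((x : ZMod n) + j).val
  obtain ⟨k, hk, hq₀, hq₁⟩ :=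
    h.exists_dense_block_of_ne_zero (ZMod.val_lt _) (by rwa [ZMod.natCast_zmod_val])
  have hfirst := blockSum_one nsize ▸ blockSum_mono nsize (show 1 ≤ 2 * k + 1 by omega)
  have hlast := h.blockSum_add_le ht (show 2 * k + 2 ≤ l + 1 by omega)
  have hqx : (q : ℤ) = x + j := by
    refine ZMod.eq_of_intCast_eq_of_abs_sub_lt (n := n)
      (by rw [Int.cast_natCast, ZMod.natCast_zmod_val]; push_cast; rfl) ?_
    rw [abs_sub_lt_iff]
    omega
  exact ⟨k, hk, by rw [denseWindow, mem_Ico]; omega⟩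

lemma wtb_eq_sum [NeZero n] (h : HasBShape b l nsize c)
    (ht : b - 1 ≤ nsize 0 + nsize (l + 1)) :
    wtb b c = ∑ k ∈ range ((l + 1) / 2), (nsize (2 * k + 1) + (b - 1)) := by
  classical
  set U := (range ((l + 1) / 2)).biUnion (denseWindow b nsize)
  have hsupp : univ.filter (fun i : ZMod n => ∃ j < b, c (i + j) ≠ 0) = U.image (↑) := by
    ext i
    simp only [mem_filter, mem_univ, true_and, mem_image, U, mem_biUnion, mem_range]
    constructor
    · rintro ⟨j, hj, hne⟩
      obtain ⟨x, hx, rfl⟩ := ZMod.exists_mem_Ico_intCast_eq (nsize 0 - (b - 1 : ℕ)) i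
      obtain ⟨k, hk, hxk⟩ := h.exists_mem_denseWindow_of_ne_zero ht hx hj hne
      exact ⟨x, ⟨k, hk, hxk⟩, rfl⟩
    · rintro ⟨x, ⟨k, hk, hxk⟩, rfl⟩
      exact h.exists_ne_zero_of_mem_denseWindow hk hxk
  have hinj : Set.InjOn (Int.cast : ℤ → ZMod n) U := by
    intro x hx y hy hxy
    obtain ⟨k, hk, hxk⟩ := mem_biUnion.1 hx
    obtain ⟨k', hk', hyk'⟩ := mem_biUnion.1 hy
    obtain ⟨hx₀, hx₁⟩ := h.mem_Ico_of_mem_denseWindow ht (mem_range.1 hk) hxk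
    obtain ⟨hy₀, hy₁⟩ := h.mem_Ico_of_mem_denseWindow ht (mem_range.1 hk') hyk'
    refine ZMod.eq_of_intCast_eq_of_abs_sub_lt hxy ?_
    rw [abs_sub_lt_iff]
    omega
  rw [wtb, Nat.card_eq_fintype_card, Fintype.card_subtype, hsupp, card_image_of_injOn hinj,
    card_biUnion h.pairwiseDisjoint_denseWindow]
  simp only [card_denseWindow]

end HasBShape

theorem wtb_of_bshape_case4_general
    {F : Type*} [Field F] {n : ℕ} [NeZero n] (b l : ℕ)
    (nsize : ℕ → ℕ) (c : ZMod n → F)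
    (hshape : HasBShape b l nsize c)
    (hlodd : Odd l) (ht : b - 1 ≤ nsize 0 + nsize (l + 1)) :
    wtb b c = (∑ i ∈ Finset.range ((l + 1) / 2), nsize (2 * i + 1)) +
      (l + 1) * (b - 1) / 2 := by
  rw [hshape.wtb_eq_sum ht, sum_add_distrib, sum_const, card_range, smul_eq_mul,
    Nat.mul_div_right_comm hlodd.add_one.two_dvd]

/-- If `t = n_0 + n_{l+1} ≥ b - 1` and `l ≥ 3` is odd, then
`wt_b(c) = ∑_{i=1}^{(l+1)/2} n_{2i-1} + (l+1)(b-1)/2`. -/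
theorem wtb_of_bshape_case4
    {F : Type*} [Field F] {n : ℕ} [NeZero n] (b l : ℕ) (hb : 2 ≤ b)
    (nsize : ℕ → ℕ) (c : ZMod n → F) (hc : c ≠ 0)
    (hshape : HasBShape b l nsize c)
    (hl : 3 ≤ l) (hlodd : Odd l) (ht : b - 1 ≤ nsize 0 + nsize (l + 1)) :
    wtb b c = (∑ i ∈ Finset.range ((l + 1) / 2), nsize (2 * i + 1)) +
      (l + 1) * (b - 1) / 2 :=
  wtb_of_bshape_case4_general b l nsize c hshape hlodd ht
end

section
/- Let C be an [n, k, d] MDS code over F_q with d = n-k+1, and let b ≥ 2 with d + b - 1 < n. Then every nonzero codeword of C has b-weight at least d + b - 1; that is, A^b(w) = 0 for 1 ≤ w ≤ d + b - 2. -/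
open Finset

section BWeight

variable {F : Type*} [Zero F] {n : ℕ}

theorem wtb_zero (b : ℕ) : wtb b (0 : ZMod n → F) = 0 := by
  simp [wtb]

theorem wtb_eq_card_filter [NeZero n] [DecidableEq F] (b : ℕ) (x : ZMod n → F) :
    wtb b x = #{i | ∃ j < b, x (i + (j : ZMod n)) ≠ 0} := by
  rw [wtb, Nat.card_eq_fintype_card, Fintype.card_subtype]

theorem wtb_eq_of_forall_exists_ne_zero [NeZero n] {b : ℕ} {x : ZMod n → F}
    (h : ∀ i : ZMod n, ∃ j < b, x (i + (j : ZMod n)) ≠ 0) : wtb b x = n := by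
  rw [wtb, Nat.card_congr (Equiv.subtypeUnivEquiv h), Nat.card_eq_fintype_card, ZMod.card]

theorem exists_ne_zero_of_zero_window [NeZero n] {b : ℕ} {c : ZMod n → F} (hc : c ≠ 0)
    {i₀ : ZMod n} (hi₀ : ∀ j < b, c (i₀ + (j : ZMod n)) = 0) :
    ∃ s, c s ≠ 0 ∧ ∀ j, 0 < j → j < b → c (s - (j : ZMod n)) = 0 := by
  classical
  have hex : ∃ m : ℕ, c (i₀ + (m : ZMod n)) ≠ 0 := by
    obtain ⟨x, hx⟩ := Function.ne_iff.1 hc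
    exact ⟨(x - i₀).val, by simpa using hx⟩
  have hbm : b ≤ Nat.find hex := by
    by_contra! h
    exact Nat.find_spec hex (hi₀ _ h)
  refine ⟨i₀ + (Nat.find hex : ZMod n), Nat.find_spec hex, fun j hj0 hjb => ?_⟩
  have hmin := Nat.find_min hex (m := Nat.find hex - j) (by omega)
  push Not at hmin
  rwa [Nat.cast_sub (by omega), ← add_sub_assoc] at hmin

theorem hammingNorm_add_le_wtb [NeZero n] [DecidableEq F] {b : ℕ} (hb : 0 < b)
    {c : ZMod n → F} {s : ZMod n} (hs : c s ≠ 0)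
    (hbefore : ∀ j, 0 < j → j < b → c (s - (j : ZMod n)) = 0) :
    hammingNorm c + (b - 1) ≤ wtb b c := by
  have hbn : b ≤ n := by
    by_contra! h
    exact hs (by simpa using hbefore n (NeZero.pos n) h)
  set S : Finset (ZMod n) := {i | c i ≠ 0}
  set T : Finset (ZMod n) := {i | ∃ j < b, c (i + (j : ZMod n)) ≠ 0}
  set D := (Ico 1 b).image fun j : ℕ => s - (j : ZMod n)
  have hD : #D = b - 1 := by
    rw [card_image_of_injOn, Nat.card_Ico]
    intro i hi j hj hij
    simp only [coe_Ico, Set.mem_Ico] at hi hj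
    have := (ZMod.natCast_eq_natCast_iff' i j n).1 (sub_right_injective hij)
    rwa [Nat.mod_eq_of_lt (by omega), Nat.mod_eq_of_lt (by omega)] at this
  have hdisj : Disjoint S D := by
    simp only [S, D, disjoint_left, mem_filter, mem_univ, true_and, mem_image, mem_Ico]
    rintro _ hne ⟨j, ⟨hj0, hjb⟩, rfl⟩
    exact hne (hbefore j hj0 hjb)
  have hsub : S ∪ D ⊆ T := by
    refine union_subset (fun i hi => ?_) (fun i hi => ?_)
    · simp only [S, T, mem_filter, mem_univ, true_and] at hi ⊢
      exact ⟨0, hb, by simpa using hi⟩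
    · obtain ⟨j, hj, rfl⟩ := mem_image.1 hi
      simp only [T, mem_filter, mem_univ, true_and]
      exact ⟨j, (mem_Ico.1 hj).2, by simpa using hs⟩
  calc hammingNorm c + (b - 1) = #(S ∪ D) := by
        rw [card_union_of_disjoint hdisj, hD, hammingNorm]
    _ ≤ wtb b c := by rw [wtb_eq_card_filter]; exact card_le_card hsub

theorem min_hammingNorm_add_le_wtb [NeZero n] [DecidableEq F] {b : ℕ} (hb : 0 < b)
    {c : ZMod n → F} (hc : c ≠ 0) : min n (hammingNorm c + (b - 1)) ≤ wtb b c := by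
  by_cases hall : ∀ i : ZMod n, ∃ j < b, c (i + (j : ZMod n)) ≠ 0
  · exact (wtb_eq_of_forall_exists_ne_zero hall).ge.trans' (min_le_left _ _)
  · push Not at hall
    obtain ⟨i₀, hi₀⟩ := hall
    obtain ⟨s, hs, hbefore⟩ := exists_ne_zero_of_zero_window hc hi₀
    exact (min_le_right _ _).trans (hammingNorm_add_le_wtb hb hs hbefore)

end BWeight

theorem mds_bweight_zero_range_general
    {F : Type*} [Field F] [DecidableEq F] {n : ℕ} [NeZero n]
    (d b : ℕ) (C : Submodule F (ZMod n → F))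
    (hmin : ∀ c ∈ C, c ≠ 0 → d ≤ hammingNorm c)
    (hb : 2 ≤ b) (hdb : d + b - 1 < n) :
    (∀ c ∈ C, c ≠ 0 → d + b - 1 ≤ wtb b c) ∧
    (∀ w, 1 ≤ w → w ≤ d + b - 2 →
      Nat.card {c : C // wtb b (c : ZMod n → F) = w} = 0) := by
  have hlower : ∀ c ∈ C, c ≠ 0 → d + b - 1 ≤ wtb b c := fun c hcC hc0 => by
    have := min_hammingNorm_add_le_wtb (b := b) (by omega) hc0
    have := hmin c hcC hc0
    omega
  refine ⟨hlower, fun w hw1 hw2 => Nat.card_eq_zero.2 (Or.inl ⟨?_⟩)⟩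
  rintro ⟨⟨c, hcC⟩, hwc⟩
  by_cases hc0 : c = 0
  · subst hc0
    rw [wtb_zero] at hwc
    omega
  · have := hlower c hcC hc0
    simp only at hwc
    omega

/-- For an `[n,k,d]` MDS code `C` with `b ≥ 2` and `d + b - 1 < n`, every nonzero
codeword has `b`-weight at least `d + b - 1`; equivalently `A^b(w) = 0` for
`1 ≤ w ≤ d + b - 2`. -/
theorem mds_bweight_zero_range
    {F : Type*} [Field F] [Fintype F] [DecidableEq F] {n : ℕ} [NeZero n]
    (k d b : ℕ) (C : Submodule F (ZMod n → F))
    (hk : Module.finrank F C = k)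
    (hmin : ∀ c ∈ C, c ≠ 0 → d ≤ hammingNorm c)
    (hex : ∃ c ∈ C, c ≠ 0 ∧ hammingNorm c = d)
    (hMDS : d = n - k + 1)
    (hb : 2 ≤ b) (hdb : d + b - 1 < n) :
    (∀ c ∈ C, c ≠ 0 → d + b - 1 ≤ wtb b c) ∧
    (∀ w, 1 ≤ w → w ≤ d + b - 2 →
      Nat.card {c : C // wtb b (c : ZMod n → F) = w} = 0) :=
  mds_bweight_zero_range_general d b C hmin hb hdb
end

section
/- Let C be an [n, k, d] MDS code over F_q with b ≥ 2 and d + b - 1 < n. Then the number of codewords of C with b-weight exactly d + b - 1 is A^b(d+b-1) = n(q-1). -/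
open Finset

section CyclicInterval

variable {n : ℕ}

def cyclicInterval (i : ZMod n) (d : ℕ) : Finset (ZMod n) := (range d).image fun t : ℕ ↦ i + t

theorem mem_cyclicInterval {i j : ZMod n} {d : ℕ} :
    j ∈ cyclicInterval i d ↔ ∃ t < d, i + t = j := by
  simp [cyclicInterval]

theorem card_cyclicInterval (i : ZMod n) {d : ℕ} (h : d ≤ n) : #(cyclicInterval i d) = d := by
  rw [cyclicInterval, card_image_of_injOn, card_range]
  intro s hs t ht hst
  have := congrArg ZMod.val (add_left_cancel hst)
  simp only [coe_range, Set.mem_Iio] at hs ht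
  rwa [ZMod.val_natCast_of_lt (hs.trans_le h), ZMod.val_natCast_of_lt (ht.trans_le h)] at this

theorem sub_one_notMem_cyclicInterval (i : ZMod n) {d : ℕ} (h : d < n) :
    i - 1 ∉ cyclicInterval i d := by
  rw [mem_cyclicInterval]
  rintro ⟨t, ht, hit⟩
  have : ((t + 1 : ℕ) : ZMod n) = 0 := by push_cast; linear_combination hit
  have := Nat.le_of_dvd t.succ_pos ((ZMod.natCast_eq_zero_iff _ _).1 this)
  omega

theorem cyclicInterval_left_injective {d : ℕ} (hd : 0 < d) (hdn : d < n) :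
    Function.Injective fun i : ZMod n ↦ cyclicInterval i d := by
  intro i i' (h : cyclicInterval i d = cyclicInterval i' d)
  have hi' : i' ∈ cyclicInterval i d := h ▸ mem_cyclicInterval.2 ⟨0, hd, by simp⟩
  obtain ⟨_ | t, ht, rfl⟩ := mem_cyclicInterval.1 hi'
  · simp
  · refine absurd (h ▸ mem_cyclicInterval.2 ⟨t, by omega, ?_⟩)
      (sub_one_notMem_cyclicInterval _ hdn)
    push_cast
    ring

theorem filter_exists_add_mem_cyclicInterval [NeZero n] (i : ZMod n) {b d : ℕ} (hb : 0 < b)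
    (hd : 0 < d) :
    ({m | ∃ j < b, m + (j : ZMod n) ∈ cyclicInterval i d} : Finset (ZMod n)) =
      cyclicInterval (i - ((b - 1 : ℕ) : ZMod n)) (d + b - 1) := by
  ext m
  simp only [mem_filter, mem_univ, true_and, mem_cyclicInterval]
  constructor
  · rintro ⟨j, hj, t, ht, hm⟩
    refine ⟨t + (b - 1) - j, by omega, ?_⟩
    push_cast [show j ≤ t + (b - 1) by omega]
    linear_combination hm
  · rintro ⟨s, hs, rfl⟩
    refine ⟨s - (b - 1) + (b - 1) - s, by omega, s - (b - 1), by omega, ?_⟩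
    have key : s - (b - 1) + (b - 1) = s + (s - (b - 1) + (b - 1) - s) := by omega
    have := congrArg (Nat.cast : ℕ → ZMod n) key
    push_cast at this
    linear_combination this

end CyclicInterval

section Interval

variable {M W : Finset ℕ} {b : ℕ}

-- Read `M` as a support in `ℕ` and `W` as (a superset of) its set of window starts.
theorem card_add_sub_one_le_card {S : Finset ℕ} {a : ℕ} (ha : a ∈ M) (hab : b - 1 ≤ a)
    (hW : ∀ m j, j < b → m + j ∈ M → m ∈ W) (hS : S ⊆ W) (hSa : ∀ s ∈ S, a ≤ s) :
    #S + (b - 1) ≤ #W := by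
  have hI : Ico (a - (b - 1)) a ⊆ W := fun m hm ↦ by
    rw [mem_Ico] at hm
    exact hW m (a - m) (by omega) (by rwa [Nat.add_sub_cancel' hm.2.le])
  have hdisj : Disjoint S (Ico (a - (b - 1)) a) :=
    disjoint_left.2 fun s hs hs' ↦ by have := hSa s hs; rw [mem_Ico] at hs'; omega
  calc #S + (b - 1) = #(S ∪ Ico (a - (b - 1)) a) := by
        rw [card_union_of_disjoint hdisj, Nat.card_Ico]; omega
    _ ≤ #W := card_le_card (union_subset hS hI)

theorem eq_Ico_of_forall_add_one_mem (hM : M.Nonempty)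
    (h : ∀ y, M.min' hM ≤ y → y + 1 ∈ M → y ∈ M) :
    M = Ico (M.min' hM) (M.min' hM + #M) := by
  set a := M.min' hM
  have hdown : ∀ k y, a ≤ y → y + k ∈ M → y ∈ M := by
    intro k
    induction k with
    | zero => simp
    | succ k ih => exact fun y hy hyk ↦ ih y hy (h _ (by omega) (by rwa [← add_assoc] at hyk))
  have hIcc : M = Icc a (M.max' hM) := by
    ext y
    refine ⟨fun hy ↦ mem_Icc.2 ⟨M.min'_le y hy, M.le_max' y hy⟩, fun hy ↦ ?_⟩
    rw [mem_Icc] at hy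
    exact hdown (M.max' hM - y) y hy.1 (by rw [Nat.add_sub_cancel' hy.2]; exact M.max'_mem hM)
  have hle : a ≤ M.max' hM := M.min'_le _ (M.max'_mem hM)
  have hcard : #M = M.max' hM + 1 - a := (congrArg card hIcc).trans (Nat.card_Icc _ _)
  calc M = Icc a (M.max' hM) := hIcc
    _ = Ico a (a + #M) := by rw [← Ico_add_one_right_eq_Icc, hcard]; congr 1; omega

theorem eq_Ico_of_card_le (hb : 2 ≤ b) (hM : M.Nonempty) (hMb : b - 1 ≤ M.min' hM)
    (hW : ∀ m j, j < b → m + j ∈ M → m ∈ W) (hcard : #W ≤ #M + (b - 1)) :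
    M = Ico (M.min' hM) (M.min' hM + #M) := by
  refine eq_Ico_of_forall_add_one_mem hM fun y hy hy1 ↦ ?_
  by_contra hyM
  have := card_add_sub_one_le_card (S := insert y M) (M.min'_mem hM) hMb hW
    (insert_subset (hW y 1 (by omega) hy1) fun m hm ↦ hW m 0 (by omega) hm)
    (by simpa [hy] using M.min'_le)
  rw [card_insert_of_notMem hyM] at this
  omega

end Interval

section Weight

variable {F : Type*} [Zero F] {n : ℕ}

theorem wtb_eq_card [DecidableEq F] [NeZero n] (b : ℕ) (x : ZMod n → F) :
    wtb b x = #{i | ∃ j < b, x (i + (j : ZMod n)) ≠ 0} := by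
  rw [wtb, Nat.card_eq_fintype_card, Fintype.card_subtype]

theorem wtb_eq_of_support_eq_cyclicInterval [DecidableEq F] [NeZero n] {x : ZMod n → F}
    {i : ZMod n} {b d : ℕ}
    (h : Function.support x = cyclicInterval i d) (hb : 0 < b) (hd : 0 < d)
    (hdb : d + b - 1 ≤ n) : wtb b x = d + b - 1 := by
  have hx (j : ZMod n) : x j ≠ 0 ↔ j ∈ cyclicInterval i d := by
    rw [← mem_coe, ← h, Function.mem_support]
  simp_rw [wtb_eq_card, hx, filter_exists_add_mem_cyclicInterval i hb hd,
    card_cyclicInterval _ hdb]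

theorem exists_forall_eq_zero_of_wtb_lt {x : ZMod n → F} {b : ℕ} (h : wtb b x < n) :
    ∃ z : ZMod n, ∀ j < b, x (z + j) = 0 := by
  by_contra! hx
  rw [wtb, Nat.card_congr (Equiv.subtypeUnivEquiv hx), Nat.card_zmod] at h
  exact lt_irrefl n h

theorem card_filter_eq_card_filter_range_add [NeZero n] (z : ZMod n) (p : ZMod n → Prop)
    [DecidablePred p] :
    #{j | p j} = #{m ∈ range n | p (z + ((m : ℕ) : ZMod n))} := by
  apply card_nbij' (fun j ↦ (j - z).val) (fun m ↦ z + m)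
  · intro j hj
    simpa [ZMod.natCast_val, ZMod.cast_id, ZMod.val_lt] using hj
  · intro m hm
    simpa using (mem_filter.1 hm).2
  · intro j _
    simp [ZMod.natCast_val, ZMod.cast_id]
  · intro m hm
    simp [ZMod.val_natCast_of_lt (mem_range.1 (mem_filter.1 hm).1)]

theorem support_eq_cyclicInterval_of_filter_range_eq_Ico [DecidableEq F] [NeZero n]
    {x : ZMod n → F} {z : ZMod n} {a d : ℕ}
    (h : {m ∈ range n | x (z + ((m : ℕ) : ZMod n)) ≠ 0} = Ico a (a + d)) :
    Function.support x = cyclicInterval (z + (a : ZMod n)) d := by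
  ext j
  rw [Function.mem_support, mem_coe, mem_cyclicInterval]
  constructor
  · intro hj
    have hm : (j - z).val ∈ Ico a (a + d) := by
      rw [← h, mem_filter]
      simpa [ZMod.natCast_val, ZMod.cast_id] using ⟨ZMod.val_lt _, hj⟩
    rw [mem_Ico] at hm
    refine ⟨(j - z).val - a, by omega, ?_⟩
    rw [add_assoc, ← Nat.cast_add, Nat.add_sub_cancel' hm.1, ZMod.natCast_val, ZMod.cast_id]
    ring
  · rintro ⟨t, ht, rfl⟩
    have hm : a + t ∈ Ico a (a + d) := by rw [mem_Ico]; omega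
    rw [← h, mem_filter] at hm
    simpa [add_assoc] using hm.2

theorem exists_support_eq_cyclicInterval_of_wtb_eq [DecidableEq F] [NeZero n] {x : ZMod n → F}
    {b d : ℕ} (hb : 2 ≤ b) (hd : 0 < d) (hx : d ≤ hammingNorm x) (hw : wtb b x = d + b - 1)
    (hn : d + b - 1 < n) :
    ∃ i : ZMod n, Function.support x = cyclicInterval i d := by
  obtain ⟨z, hz⟩ := exists_forall_eq_zero_of_wtb_lt (hw ▸ hn)
  -- Cut the cycle at the zero window starting at `z`: position `z + m` becomes `m < n`.
  set M : Finset ℕ := {m ∈ range n | x (z + ((m : ℕ) : ZMod n)) ≠ 0}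
  set W : Finset ℕ :=
    {m ∈ range n | ∃ j < b, x (z + ((m : ℕ) : ZMod n) + (j : ZMod n)) ≠ 0}
  have hMcard : #M = hammingNorm x := (card_filter_eq_card_filter_range_add z (x · ≠ 0)).symm
  have hWcard : #W = wtb b x := by rw [wtb_eq_card, card_filter_eq_card_filter_range_add z]
  have hM : M.Nonempty := card_pos.1 (by omega)
  have hMb : b - 1 ≤ M.min' hM := by
    obtain ⟨-, hne⟩ := mem_filter.1 (M.min'_mem hM)
    by_contra! hlt
    exact hne (hz _ (by omega))
  have hW (m j : ℕ) (hj : j < b) (hmj : m + j ∈ M) : m ∈ W := by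
    obtain ⟨hlt, hne⟩ := mem_filter.1 hmj
    rw [mem_range] at hlt
    push_cast at hne
    exact mem_filter.2 ⟨mem_range.2 (by omega), j, hj, by rwa [add_assoc]⟩
  have hMd : #M = d := by
    have := card_add_sub_one_le_card (M.min'_mem hM) hMb hW
      (fun m hm ↦ hW m 0 (by omega) hm) fun m ↦ M.min'_le m
    omega
  have hint := eq_Ico_of_card_le hb hM hMb hW (by omega)
  rw [hMd] at hint
  exact ⟨_, support_eq_cyclicInterval_of_filter_range_eq_Ico hint⟩

end Weight

section Subcode

variable {ι F : Type*} [Field F]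

theorem Submodule.finrank_le_card [Fintype ι] (C : Submodule F (ι → F)) :
    Module.finrank F C ≤ Fintype.card ι :=
  C.finrank_le.trans_eq (Module.finrank_fintype_fun_eq_card F)

theorem support_eq_of_subset_of_card_le {β : Type*} [Fintype ι] [Zero β] [DecidableEq β]
    {x : ι → β} {I : Finset ι} {d : ℕ}
    (hx : d ≤ hammingNorm x) (hI : #I ≤ d) (hxI : Function.support x ⊆ I) :
    Function.support x = I := by
  have hS : Function.support x = ↑({j | x j ≠ 0} : Finset ι) := by ext; simp
  rw [hS] at hxI ⊢
  exact congrArg _ (eq_of_subset_of_card_le (coe_subset.1 hxI) (hI.trans hx))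

def supportedSubcode (C : Submodule F (ι → F)) (I : Finset ι) : Submodule F C :=
  LinearMap.ker ((LinearMap.funLeft F F (Subtype.val : {j // j ∉ I} → ι)).comp C.subtype)

theorem mem_supportedSubcode {C : Submodule F (ι → F)} {I : Finset ι} {c : C} :
    c ∈ supportedSubcode C I ↔ Function.support (c : ι → F) ⊆ I := by
  simp [supportedSubcode, funext_iff, LinearMap.funLeft, not_imp_comm]

theorem finrank_supportedSubcode [Fintype ι] [DecidableEq F]
    {C : Submodule F (ι → F)} {d : ℕ}
    (hmin : ∀ c ∈ C, c ≠ 0 → d ≤ hammingNorm c)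
    (hdim : Fintype.card ι < Module.finrank F C + d) {I : Finset ι} (hI : #I = d) :
    Module.finrank F (supportedSubcode C I) = 1 := by
  obtain ⟨i, hi⟩ : I.Nonempty := card_pos.1 (by have := C.finrank_le_card; omega)
  have hinj : Function.Injective
      ((LinearMap.proj i).comp (C.subtype.comp (supportedSubcode C I).subtype)) := by
    refine (injective_iff_map_eq_zero _).2 fun v hv ↦ ?_
    by_contra hv0
    have hvI := support_eq_of_subset_of_card_le
      (hmin v v.1.2 fun h ↦ hv0 (Subtype.ext (Subtype.ext h))) hI.le (mem_supportedSubcode.1 v.2)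
    exact (show i ∈ Function.support (v : ι → F) from hvI ▸ hi) hv
  refine le_antisymm ((LinearMap.finrank_le_finrank_of_injective hinj).trans_eq
    (Module.finrank_self F)) ?_
  let ρ := (LinearMap.funLeft F F (Subtype.val : {j // j ∉ I} → ι)).comp C.subtype
  have hrk : Module.finrank F (LinearMap.range ρ) + Module.finrank F (supportedSubcode C I) =
      Module.finrank F C :=
    LinearMap.finrank_range_add_finrank_ker ρ
  have hrange := (LinearMap.range ρ).finrank_le
  classical
  rw [Module.finrank_fintype_fun_eq_card, Fintype.card_subtype_compl, Fintype.card_coe, hI]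
    at hrange
  have := I.card_le_univ
  omega

theorem natCard_support_eq [Fintype ι] [Fintype F] [DecidableEq F]
    {C : Submodule F (ι → F)} {d : ℕ}
    (hmin : ∀ c ∈ C, c ≠ 0 → d ≤ hammingNorm c)
    (hdim : Fintype.card ι < Module.finrank F C + d) {I : Finset ι} (hI : #I = d) :
    Nat.card {c : C // Function.support (c : ι → F) = I} = Fintype.card F - 1 := by
  classical
  obtain ⟨i, hi⟩ : I.Nonempty := card_pos.1 (by have := C.finrank_le_card; omega)
  have hne (c : C) (hc : Function.support (c : ι → F) = I) : c ≠ 0 := by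
    rintro rfl
    simpa using (show i ∈ Function.support ((0 : C) : ι → F) from hc ▸ hi)
  have e :
      {c : C // Function.support (c : ι → F) = I} ≃ {v : supportedSubcode C I // v ≠ 0} :=
    { toFun := fun c ↦ ⟨⟨c, mem_supportedSubcode.2 c.2.le⟩,
        fun h ↦ hne c c.2 (congrArg Subtype.val h)⟩
      invFun := fun v ↦ ⟨v, support_eq_of_subset_of_card_le
        (hmin _ v.1.1.2 fun h ↦ v.2 (Subtype.ext (Subtype.ext h))) hI.le
        (mem_supportedSubcode.1 v.1.2)⟩
      left_inv := fun c ↦ rfl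
      right_inv := fun v ↦ rfl }
  rw [Nat.card_congr e, Nat.card_eq_fintype_card, Fintype.card_subtype_compl,
    Fintype.card_subtype_eq, Module.card_eq_pow_finrank (K := F),
    finrank_supportedSubcode hmin hdim hI, pow_one]

end Subcode

theorem Nat.card_subtype_exists_eq_sum {α ι β : Type*} [Finite α] [Fintype ι] (f : α → β)
    {g : ι → β} (hg : Function.Injective g) :
    Nat.card {a // ∃ i, f a = g i} = ∑ i, Nat.card {a // f a = g i} := by
  classical
  have := Fintype.ofFinite α
  simp only [Nat.card_eq_fintype_card, Fintype.card_subtype]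
  rw [← card_biUnion]
  · congr 1
    ext a
    simp
  · intro i _ i' _ hii'
    exact disjoint_filter.2 fun a _ h h' ↦ hii' (hg (h.symm.trans h'))

theorem mds_bweight_min_count_general
    {F : Type*} [Field F] [Fintype F] [DecidableEq F] {n : ℕ} [NeZero n]
    (k d b : ℕ) (C : Submodule F (ZMod n → F))
    (hk : Module.finrank F C = k)
    (hmin : ∀ c ∈ C, c ≠ 0 → d ≤ hammingNorm c)
    (hMDS : d = n - k + 1)
    (hb : 2 ≤ b) (hdb : d + b - 1 < n) :
    Nat.card {c : C // wtb b (c : ZMod n → F) = d + b - 1} =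
      n * (Fintype.card F - 1) := by
  have hkn : k ≤ n := hk ▸ C.finrank_le_card.trans_eq (ZMod.card n)
  have hd : 0 < d := by omega
  have hwtb (c : C) : wtb b (c : ZMod n → F) = d + b - 1 ↔
      ∃ i : ZMod n, Function.support (c : ZMod n → F) = cyclicInterval i d := by
    refine ⟨fun hw ↦ ?_, fun ⟨i, hi⟩ ↦
      wtb_eq_of_support_eq_cyclicInterval hi (by omega) hd hdb.le⟩
    have hc : (c : ZMod n → F) ≠ 0 := fun h ↦ by rw [h, wtb_zero] at hw; omega
    exact exists_support_eq_cyclicInterval_of_wtb_eq hb hd (hmin c c.2 hc) hw hdb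
  have hinj : Function.Injective fun i : ZMod n ↦ (cyclicInterval i d : Set (ZMod n)) :=
    coe_injective.comp (cyclicInterval_left_injective hd (by omega))
  rw [Nat.card_congr (Equiv.subtypeEquivRight hwtb), Nat.card_subtype_exists_eq_sum _ hinj]
  simp_rw [natCard_support_eq hmin (by rw [ZMod.card]; omega) (card_cyclicInterval _ (by omega))]
  rw [sum_const, card_univ, ZMod.card, smul_eq_mul]

/-- For an `[n,k,d]` MDS code `C` with `b ≥ 2` and `d + b - 1 < n`, the number of
codewords of `b`-weight exactly `d + b - 1` is `n(q - 1)`. -/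
theorem mds_bweight_min_count
    {F : Type*} [Field F] [Fintype F] [DecidableEq F] {n : ℕ} [NeZero n]
    (k d b : ℕ) (C : Submodule F (ZMod n → F))
    (hk : Module.finrank F C = k)
    (hmin : ∀ c ∈ C, c ≠ 0 → d ≤ hammingNorm c)
    (hex : ∃ c ∈ C, c ≠ 0 ∧ hammingNorm c = d)
    (hMDS : d = n - k + 1)
    (hb : 2 ≤ b) (hdb : d + b - 1 < n) :
    Nat.card {c : C // wtb b (c : ZMod n → F) = d + b - 1} =
      n * (Fintype.card F - 1) :=
  mds_bweight_min_count_general k d b C hk hmin hMDS hb hdb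
end

section
/- Let C be a [d+3, 4, d] MDS code over F_q with d ≥ 3. Then the number of codewords with 3-weight equal to the full length d+3 is A^3(d+3) = q^4 - (d+3)q + d + 2. -/
/-! In an `[n, b + 1]` code of minimum distance at least `n - b`, a codeword with `b + 1` zeros
is `0`. So the codewords vanishing on a cyclic window of `b` consecutive positions form a line:
its dimension is at least `1` by rank–nullity, and at most `1` because evaluation at the next
position is injective on it. Two distinct windows cover at least `b + 1` positions, so these `n`
lines meet only in `0`. The codewords of `b`-weight less than `n` are exactly those vanishing on
some window, hence there are `1 + n (q - 1)` of them. -/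

open Finset Module

namespace ZMod

variable {n : ℕ} [NeZero n]

/-- The positions `i, i + 1, …, i + (b - 1)` read by the cyclic `b`-weight at `i`. -/
def window (i : ZMod n) (b : ℕ) : Finset (ZMod n) := {x | (x - i).val < b}

variable {i j x : ZMod n} {b : ℕ}

@[simp]
theorem mem_window : x ∈ window i b ↔ (x - i).val < b := by
  simp [window]

theorem mem_window_iff_exists : x ∈ window i b ↔ ∃ k < b, i + k = x := by
  rw [mem_window]
  constructor
  · exact fun h => ⟨_, h, by rw [natCast_zmod_val, add_sub_cancel]⟩
  · rintro ⟨k, hk, rfl⟩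
    rw [add_sub_cancel_left, val_natCast]
    exact (Nat.mod_le k n).trans_lt hk

theorem window_eq_image : window i b = (range b).image fun k : ℕ => i + (k : ZMod n) := by
  ext x
  simp only [mem_window_iff_exists, mem_image, mem_range]

theorem card_window (h : b ≤ n) : #(window i b) = b := by
  rw [window_eq_image, card_image_of_injOn, card_range]
  intro k hk l hl hkl
  simpa [val_cast_of_lt ((mem_range.1 hk).trans_le h),
    val_cast_of_lt ((mem_range.1 hl).trans_le h)] using congrArg val (add_left_cancel hkl)

theorem add_natCast_notMem_window (h : b < n) : i + b ∉ window i b := by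
  simp [val_cast_of_lt h]

theorem exists_mem_window_notMem_window (hb : 0 < b) (hbn : b < n) (hij : i ≠ j) :
    ∃ x ∈ window j b, x ∉ window i b := by
  set t := (j - i).val
  have ht : 0 < t := Nat.pos_of_ne_zero fun h => hij (sub_eq_zero.1 (val_eq_zero _ |>.1 h)).symm
  refine ⟨i + (max t b : ℕ), ?_, ?_⟩
  · have : i + ((max t b : ℕ) : ZMod n) - j = ((max t b - t : ℕ) : ZMod n) := by
      rw [Nat.cast_sub (le_max_left t b), natCast_zmod_val]
      ring
    rw [mem_window, this, val_cast_of_lt (by omega)]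
    omega
  · rw [mem_window, add_sub_cancel_left, val_cast_of_lt (max_lt (val_lt _) hbn)]
    omega

theorem lt_card_window_union (hb : 0 < b) (hbn : b < n) (hij : i ≠ j) :
    b < #(window i b ∪ window j b) := by
  obtain ⟨x, hxj, hxi⟩ := exists_mem_window_notMem_window hb hbn hij
  calc b = #(window i b) := (card_window hbn.le).symm
    _ < _ := card_lt_card <| (ssubset_iff_of_subset subset_union_left).2
      ⟨x, mem_union_right _ hxj, hxi⟩

theorem wtb_eq_iff {F : Type*} [Zero F] (c : ZMod n → F) :
    wtb b c = n ↔ ∀ i : ZMod n, ∃ x ∈ window i b, c x ≠ 0 := by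
  classical
  have hn : #(univ : Finset (ZMod n)) = n := ZMod.card n
  rw [wtb, Nat.card_eq_fintype_card, Fintype.card_subtype, ← Eq.congr_right hn,
    card_filter_eq_iff]
  simp only [mem_univ, true_implies, mem_window_iff_exists]
  exact forall_congr' fun i =>
    ⟨fun ⟨k, hk, h⟩ => ⟨_, ⟨k, hk, rfl⟩, h⟩, fun ⟨_, ⟨k, hk, rfl⟩, h⟩ => ⟨k, hk, h⟩⟩

end ZMod

theorem hammingNorm_add_card_le {ι β : Type*} [Fintype ι] [DecidableEq β] [Zero β] {c : ι → β}
    {s : Finset ι} (hs : ∀ i ∈ s, c i = 0) : hammingNorm c + #s ≤ Fintype.card ι := by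
  classical
  rw [hammingNorm, ← card_union_of_disjoint]
  · exact card_le_univ _
  · exact disjoint_left.2 fun i hi his => (mem_filter.1 hi).2 (hs i his)

theorem Finset.card_biUnion_of_pairwiseDisjoint_erase {ι α : Type*} [DecidableEq α] {s : Finset ι}
    {t : ι → Finset α} {a : α} (hs : s.Nonempty) (ha : ∀ i ∈ s, a ∈ t i)
    (h : (s : Set ι).PairwiseDisjoint fun i => (t i).erase a) :
    #(s.biUnion t) = 1 + ∑ i ∈ s, (#(t i) - 1) := by
  have : s.biUnion t = insert a (s.biUnion fun i => (t i).erase a) := by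
    ext x
    obtain ⟨i, hi⟩ := hs
    by_cases hx : x = a
    · subst hx; simpa using ⟨i, hi, ha i hi⟩
    · simp [hx]
  rw [this, card_insert_of_notMem (by simp), card_biUnion h, add_comm]
  congr 1
  exact sum_congr rfl fun i hi => card_erase_of_mem (ha i hi)

open ZMod

namespace Submodule

variable {F : Type*} [Field F] {n b : ℕ} [NeZero n] (C : Submodule F (ZMod n → F))

def windowKer (i : ZMod n) (b : ℕ) : Submodule F C :=
  LinearMap.ker (LinearMap.funLeft F F ((↑) : window i b → ZMod n) ∘ₗ C.subtype)

variable {C}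

theorem mem_windowKer {i : ZMod n} {c : C} :
    c ∈ C.windowKer i b ↔ ∀ x ∈ window i b, (c : ZMod n → F) x = 0 := by
  simp [windowKer, funext_iff]

variable [DecidableEq F]

variable (C) in
def MinDistAtLeast (d : ℕ) : Prop :=
  ∀ c ∈ C, c ≠ 0 → d ≤ hammingNorm c

theorem eq_zero_of_lt_card_of_forall_eq_zero (hC : C.MinDistAtLeast (n - b)) {c : ZMod n → F}
    (hc : c ∈ C) {s : Finset (ZMod n)} (hs : b < #s) (hz : ∀ x ∈ s, c x = 0) : c = 0 := by
  by_contra h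
  have h₁ := hammingNorm_add_card_le hz
  have h₂ := hC c hc h
  rw [ZMod.card] at h₁
  omega

theorem injective_eval_windowKer (hC : C.MinDistAtLeast (n - b)) (hbn : b < n) (i : ZMod n) :
    Function.Injective (LinearMap.proj (i + b) ∘ₗ C.subtype ∘ₗ (C.windowKer i b).subtype) := by
  refine (injective_iff_map_eq_zero _).2 fun c hc => ?_
  have hc' : ((c : C) : ZMod n → F) = 0 := by
    refine eq_zero_of_lt_card_of_forall_eq_zero hC (c : C).2
      (s := insert (i + b) (window i b)) ?_ ?_
    · rw [card_insert_of_notMem (add_natCast_notMem_window hbn), card_window hbn.le]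
      omega
    · exact forall_mem_insert _ _ _ |>.2 ⟨hc, mem_windowKer.1 c.2⟩
  exact Subtype.ext (Subtype.ext hc')

theorem finrank_windowKer (hC : C.MinDistAtLeast (n - b)) (hbn : b < n)
    (hk : finrank F C = b + 1) (i : ZMod n) : finrank F (C.windowKer i b) = 1 := by
  set f := LinearMap.funLeft F F ((↑) : window i b → ZMod n) ∘ₗ C.subtype
  have hge : b + 1 ≤ b + finrank F (C.windowKer i b) := by
    have hrange : finrank F (LinearMap.range f) ≤ b := by
      simpa only [Module.finrank_fintype_fun_eq_card, Fintype.card_coe, card_window hbn.le]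
        using Submodule.finrank_le (LinearMap.range f)
    rw [← hk, ← LinearMap.finrank_range_add_finrank_ker f]
    exact Nat.add_le_add_right hrange _
  have hle : finrank F (C.windowKer i b) ≤ 1 := by
    simpa using LinearMap.finrank_le_finrank_of_injective (injective_eval_windowKer hC hbn i)
  omega

theorem natCard_windowKer [Fintype F] (hC : C.MinDistAtLeast (n - b)) (hbn : b < n)
    (hk : finrank F C = b + 1) (i : ZMod n) : Nat.card (C.windowKer i b) = Fintype.card F := by
  classical
  rw [Nat.card_eq_fintype_card, Module.card_eq_pow_finrank (K := F), finrank_windowKer hC hbn hk,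
    pow_one]

theorem eq_zero_of_mem_windowKer_of_mem_windowKer
    (hC : C.MinDistAtLeast (n - b)) (hb : 0 < b) (hbn : b < n) {i j : ZMod n}
    (hij : i ≠ j) {c : C} (hi : c ∈ C.windowKer i b) (hj : c ∈ C.windowKer j b) : c = 0 := by
  refine Subtype.ext <|
    eq_zero_of_lt_card_of_forall_eq_zero hC c.2 (lt_card_window_union hb hbn hij) ?_
  simp only [mem_union]
  rintro x (hx | hx)
  exacts [mem_windowKer.1 hi x hx, mem_windowKer.1 hj x hx]

theorem natCard_exists_mem_windowKer [Fintype F] (hC : C.MinDistAtLeast (n - b))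
    (hb : 0 < b) (hbn : b < n) (hk : finrank F C = b + 1) :
    Nat.card {c : C // ∃ i, c ∈ C.windowKer i b} = 1 + n * (Fintype.card F - 1) := by
  classical
  rw [Nat.card_eq_fintype_card, Fintype.card_subtype]
  have hunion : ({c | ∃ i, c ∈ C.windowKer i b} : Finset C) =
      univ.biUnion fun i => {c | c ∈ C.windowKer i b} := by
    ext c
    simp
  have hcard (i : ZMod n) : #({c | c ∈ C.windowKer i b} : Finset C) = Fintype.card F := by
    rw [← natCard_windowKer hC hbn hk i, Nat.card_eq_fintype_card, Fintype.card_subtype]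
  rw [hunion, card_biUnion_of_pairwiseDisjoint_erase univ_nonempty (a := 0) (by simp)]
  · simp only [hcard, sum_const, card_univ, ZMod.card, smul_eq_mul]
  · intro i _ j _ hij
    refine disjoint_left.2 fun c hci hcj => ?_
    simp only [mem_erase, mem_filter, mem_univ, true_and] at hci hcj
    exact hci.1 (eq_zero_of_mem_windowKer_of_mem_windowKer hC hb hbn hij hci.2 hcj.2)

theorem natCard_wtb_eq_add_eq_pow [Fintype F] (hC : C.MinDistAtLeast (n - b))
    (hb : 0 < b) (hbn : b < n) (hk : finrank F C = b + 1) :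
    Nat.card {c : C // wtb b (c : ZMod n → F) = n} + (1 + n * (Fintype.card F - 1)) =
      Fintype.card F ^ (b + 1) := by
  classical
  have hwtb (c : C) : wtb b (c : ZMod n → F) = n ↔ ¬∃ i, c ∈ C.windowKer i b := by
    simp only [wtb_eq_iff, mem_windowKer, not_exists, not_forall, exists_prop]
  rw [← natCard_exists_mem_windowKer hC hb hbn hk, ← hk, ← Module.card_eq_pow_finrank,
    Nat.card_congr (Equiv.subtypeEquivRight hwtb), Nat.card_eq_fintype_card,
    Nat.card_eq_fintype_card, Fintype.card_subtype, Fintype.card_subtype, add_comm,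
    card_filter_add_card_filter_not, card_univ]

end Submodule

theorem mds_three_weight_full_general
    {F : Type*} [Field F] [Fintype F] [DecidableEq F]
    (d : ℕ) (hd : 3 ≤ d) [NeZero (d + 3)]
    (C : Submodule F (ZMod (d + 3) → F))
    (hk : Module.finrank F C = 4)
    (hmin : ∀ c ∈ C, c ≠ 0 → d ≤ hammingNorm c) :
    (Nat.card {c : C // wtb 3 (c : ZMod (d + 3) → F) = d + 3} : ℤ) =
      (Fintype.card F : ℤ) ^ 4 - (d + 3) * (Fintype.card F : ℤ) + d + 2 := by
  have hC : C.MinDistAtLeast (d + 3 - 3) := by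
    rw [Nat.add_sub_cancel]
    exact hmin
  have h := congrArg (Nat.cast : ℕ → ℤ) (C.natCard_wtb_eq_add_eq_pow hC (by norm_num) (by omega) hk)
  push_cast [Nat.cast_sub Fintype.card_pos] at h
  linear_combination h

/-- For a `[d+3, 4, d]` MDS code `C` over `F_q` with `d ≥ 3`, the number of
codewords with full `3`-weight `d+3` is `q^4 - (d+3)q + d + 2`. -/
theorem mds_three_weight_full
    {F : Type*} [Field F] [Fintype F] [DecidableEq F]
    (d : ℕ) (hd : 3 ≤ d) [NeZero (d + 3)]
    (C : Submodule F (ZMod (d + 3) → F))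
    (hk : Module.finrank F C = 4)
    (hmin : ∀ c ∈ C, c ≠ 0 → d ≤ hammingNorm c)
    (hex : ∃ c ∈ C, c ≠ 0 ∧ hammingNorm c = d) :
    (Nat.card {c : C // wtb 3 (c : ZMod (d + 3) → F) = d + 3} : ℤ) =
      (Fintype.card F : ℤ) ^ 4 - (d + 3) * (Fintype.card F : ℤ) + d + 2 :=
  mds_three_weight_full_general d hd C hk hmin
end

section
/- Let C be a [d+3, 4, d] MDS code over F_q with d ≥ 3. Then the b=3 weight enumerator satisfies A^3(0) = 1, A^3(w) = 0 for 1 ≤ w ≤ d+1, A^3(d+2) = (d+3)(q-1), and A^3(d+3) = q^4 - (d+3)q + d + 2; in particular these values sum to q^4. -/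
/-! Let `C` be a linear code of length `n = d + b` and dimension `b + 1` whose nonzero words have
weight at least `d` (an MDS code). A nonzero codeword has at most `b` zeros, so it vanishes on no
window of `b + 1` consecutive positions and on at most one window of `b` positions: its cyclic
`b`-weight is `n - 1` or `n`. The codewords vanishing on a fixed `b`-window form a line, by
rank–nullity on one side and injectivity of the evaluation at the next position on the other.
Counting its nonzero points over the `n` windows gives `A^b(n - 1) = n(q - 1)`, and `A^b(n)` is
what remains of `q^(b + 1)`. -/

open Finset

section CyclicWindow

variable {n b : ℕ}

def cyclicWindow (b : ℕ) (i : ZMod n) : Finset (ZMod n) :=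
  (range b).image fun j : ℕ => i + (j : ZMod n)

lemma mem_cyclicWindow {i k : ZMod n} : k ∈ cyclicWindow b i ↔ ∃ j < b, i + j = k := by
  simp [cyclicWindow]

lemma self_mem_cyclicWindow (hb : 0 < b) (i : ZMod n) : i ∈ cyclicWindow b i :=
  mem_cyclicWindow.2 ⟨0, hb, by simp⟩

lemma cyclicWindow_succ (i : ZMod n) :
    cyclicWindow (b + 1) i = insert (i + b) (cyclicWindow b i) := by
  rw [cyclicWindow, range_add_one, image_insert, cyclicWindow]

lemma card_cyclicWindow (hb : b ≤ n) (i : ZMod n) : #(cyclicWindow b i) = b := by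
  rw [cyclicWindow, card_image_of_injOn, card_range]
  intro j hj k hk hjk
  have hjk' := (ZMod.natCast_eq_natCast_iff' j k n).1 (add_left_cancel hjk)
  simp only [coe_range, Set.mem_Iio] at hj hk
  rwa [Nat.mod_eq_of_lt (by omega), Nat.mod_eq_of_lt (by omega)] at hjk'

lemma sub_one_notMem_cyclicWindow (hb : b < n) (i : ZMod n) : i - 1 ∉ cyclicWindow b i := by
  intro hmem
  obtain ⟨j, hj, h⟩ := mem_cyclicWindow.1 hmem
  have hdvd : n ∣ j + 1 := by
    rw [← ZMod.natCast_eq_zero_iff]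
    push_cast
    linear_combination h
  have := Nat.le_of_dvd (by omega) hdvd
  omega

/-- The start of a window is its only element whose predecessor lies outside it. -/
lemma cyclicWindow_injective (hb₀ : 0 < b) (hb : b < n) :
    Function.Injective (cyclicWindow (n := n) b) := by
  intro i i' h
  obtain ⟨j, hj, rfl⟩ := mem_cyclicWindow.1 (h ▸ self_mem_cyclicWindow hb₀ i')
  rcases j with _ | j
  · simp
  · refine absurd ?_ (sub_one_notMem_cyclicWindow hb (i + (j + 1 : ℕ)))
    rw [← h]
    exact mem_cyclicWindow.2 ⟨j, by omega, by push_cast; ring⟩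

variable {F : Type*} [Zero F]

lemma wtb_add_card_vanishing [NeZero n] (b : ℕ) (x : ZMod n → F) :
    wtb b x + Nat.card {i // ∀ k ∈ cyclicWindow b i, x k = 0} = n := by
  classical
  have hcompl : wtb b x = Nat.card {i // ¬ ∀ k ∈ cyclicWindow b i, x k = 0} :=
    Nat.card_congr <| Equiv.subtypeEquivRight fun i => by simp [mem_cyclicWindow]
  rw [hcompl, Nat.card_eq_fintype_card, Nat.card_eq_fintype_card, Fintype.card_subtype_compl,
    ZMod.card]
  have := Fintype.card_subtype_le fun i : ZMod n => ∀ k ∈ cyclicWindow b i, x k = 0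
  rw [ZMod.card] at this
  omega

lemma wtb_eq_zero_iff [NeZero n] (hb : 0 < b) {x : ZMod n → F} : wtb b x = 0 ↔ x = 0 := by
  rw [wtb, Finite.card_eq_zero_iff, isEmpty_subtype]
  constructor
  · intro h
    funext i
    simpa [hb] using not_exists.1 (h i) 0
  · rintro rfl i
    simp

lemma wtb_eq_of_forall_not_vanishes [NeZero n] {x : ZMod n → F}
    (h : ∀ i, ¬ ∀ k ∈ cyclicWindow b i, x k = 0) : wtb b x = n := by
  have hempty : IsEmpty {i // ∀ k ∈ cyclicWindow b i, x k = 0} := isEmpty_subtype _ |>.2 h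
  have := wtb_add_card_vanishing b x
  rwa [Nat.card_of_isEmpty, add_zero] at this

lemma card_wtb_eq_zero {R M : Type*} [Semiring R] [AddCommMonoid M] [Module R M] [NeZero n]
    (hb : 0 < b) (C : Submodule R (ZMod n → M)) :
    Nat.card {c : C // wtb b (c : ZMod n → M) = 0} = 1 := by
  rw [Nat.card_congr (Equiv.subtypeEquivRight fun c : C => by
    rw [wtb_eq_zero_iff hb, Submodule.coe_eq_zero])]
  exact Nat.card_unique

end CyclicWindow

lemma hammingNorm_add_card_le_of_forall_eq_zero {ι F : Type*} [Fintype ι] [Zero F]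
    [DecidableEq F] {x : ι → F} {S : Finset ι}
    (hS : ∀ i ∈ S, x i = 0) : hammingNorm x + #S ≤ Fintype.card ι := by
  classical
  rw [hammingNorm, ← card_union_of_disjoint, ← card_univ]
  · exact card_le_univ _
  · exact disjoint_left.2 fun i hi hiS => (mem_filter.1 hi).2 (hS i hiS)

section VanishingSubmodule

variable {ι F : Type*} [Field F] (C : Submodule F (ι → F))

def vanishingSubmodule (S : Finset ι) : Submodule F C :=
  LinearMap.ker ((LinearMap.funLeft F F ((↑) : S → ι)).comp C.subtype)

variable {C}

lemma mem_vanishingSubmodule {S : Finset ι} {c : C} :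
    c ∈ vanishingSubmodule C S ↔ ∀ i ∈ S, (c : ι → F) i = 0 := by
  simp [vanishingSubmodule, funext_iff, LinearMap.funLeft]

lemma finrank_le_finrank_vanishingSubmodule_add_card [Fintype ι] (S : Finset ι) :
    Module.finrank F C ≤ Module.finrank F (vanishingSubmodule C S) + #S := by
  have hrange := Submodule.finrank_le
    (LinearMap.range ((LinearMap.funLeft F F ((↑) : S → ι)).comp C.subtype))
  rw [Module.finrank_fintype_fun_eq_card, Fintype.card_coe] at hrange
  have := LinearMap.finrank_range_add_finrank_ker
    ((LinearMap.funLeft F F ((↑) : S → ι)).comp C.subtype)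
  rw [vanishingSubmodule]
  omega

end VanishingSubmodule

section MDS

variable {F : Type*} [Field F] [DecidableEq F] {b d : ℕ} [NeZero (d + b)]
  {C : Submodule F (ZMod (d + b) → F)}

lemma eq_zero_of_vanishes_cyclicWindow_succ (hd : 0 < d)
    (hmin : ∀ c ∈ C, c ≠ 0 → d ≤ hammingNorm c) {c : ZMod (d + b) → F} (hc : c ∈ C)
    {i : ZMod (d + b)} (h : ∀ k ∈ cyclicWindow (b + 1) i, c k = 0) : c = 0 := by
  by_contra hc0
  have hzeros := hammingNorm_add_card_le_of_forall_eq_zero h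
  rw [card_cyclicWindow (by omega), ZMod.card] at hzeros
  have := hmin c hc hc0
  omega

lemma eq_of_vanishes_cyclicWindow (hb : 0 < b) (hd : 0 < d)
    (hmin : ∀ c ∈ C, c ≠ 0 → d ≤ hammingNorm c) {c : ZMod (d + b) → F} (hc : c ∈ C)
    (hc0 : c ≠ 0) {i i' : ZMod (d + b)} (h : ∀ k ∈ cyclicWindow b i, c k = 0)
    (h' : ∀ k ∈ cyclicWindow b i', c k = 0) : i = i' := by
  classical
  set U := cyclicWindow b i ∪ cyclicWindow b i'
  have hzeros := hammingNorm_add_card_le_of_forall_eq_zero (S := U) fun k hk =>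
    (mem_union.1 hk).elim (h k) (h' k)
  rw [ZMod.card] at hzeros
  have hU : #U ≤ b := by have := hmin c hc hc0; omega
  have hW : cyclicWindow b i = U :=
    eq_of_subset_of_card_le subset_union_left (by rwa [card_cyclicWindow (by omega)])
  have hW' : cyclicWindow b i' = U :=
    eq_of_subset_of_card_le subset_union_right (by rwa [card_cyclicWindow (by omega)])
  exact cyclicWindow_injective hb (by omega) (hW.trans hW'.symm)

lemma wtb_add_one_eq_of_vanishes (hb : 0 < b) (hd : 0 < d)
    (hmin : ∀ c ∈ C, c ≠ 0 → d ≤ hammingNorm c) {c : ZMod (d + b) → F} (hc : c ∈ C)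
    (hc0 : c ≠ 0) {i : ZMod (d + b)} (h : ∀ k ∈ cyclicWindow b i, c k = 0) :
    wtb b c + 1 = d + b := by
  have hunique : Nat.card {j // ∀ k ∈ cyclicWindow b j, c k = 0} = 1 :=
    Nat.card_eq_one_iff_unique.2
      ⟨⟨fun j j' => Subtype.ext (eq_of_vanishes_cyclicWindow hb hd hmin hc hc0 j.2 j'.2)⟩,
        ⟨⟨i, h⟩⟩⟩
  rw [← hunique, wtb_add_card_vanishing]

lemma wtb_trichotomy (hb : 0 < b) (hd : 0 < d)
    (hmin : ∀ c ∈ C, c ≠ 0 → d ≤ hammingNorm c) {c : ZMod (d + b) → F} (hc : c ∈ C) :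
    wtb b c = 0 ∨ wtb b c + 1 = d + b ∨ wtb b c = d + b := by
  by_cases hc0 : c = 0
  · exact Or.inl ((wtb_eq_zero_iff hb).2 hc0)
  by_cases hwin : ∃ i, ∀ k ∈ cyclicWindow b i, c k = 0
  · obtain ⟨i, hi⟩ := hwin
    exact Or.inr (Or.inl (wtb_add_one_eq_of_vanishes hb hd hmin hc hc0 hi))
  · exact Or.inr (Or.inr (wtb_eq_of_forall_not_vanishes (not_exists.1 hwin)))

lemma wtb_add_one_eq_iff (hb : 0 < b) (hd : 0 < d)
    (hmin : ∀ c ∈ C, c ≠ 0 → d ≤ hammingNorm c) {c : ZMod (d + b) → F} (hc : c ∈ C) :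
    wtb b c + 1 = d + b ↔ c ≠ 0 ∧ ∃ i, ∀ k ∈ cyclicWindow b i, c k = 0 := by
  refine ⟨fun hwtb => ⟨fun hc0 => ?_, ?_⟩, fun ⟨hc0, i, hi⟩ =>
    wtb_add_one_eq_of_vanishes hb hd hmin hc hc0 hi⟩
  · rw [(wtb_eq_zero_iff hb).2 hc0] at hwtb
    omega
  · by_contra hwin
    have := wtb_eq_of_forall_not_vanishes (not_exists.1 hwin)
    omega

lemma card_wtb_eq_zero_of_pos_of_lt (hb : 0 < b) (hd : 0 < d)
    (hmin : ∀ c ∈ C, c ≠ 0 → d ≤ hammingNorm c) {w : ℕ} (hw₀ : 0 < w)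
    (hw : w + 1 < d + b) :
    Nat.card {c : C // wtb b (c : ZMod (d + b) → F) = w} = 0 := by
  have : IsEmpty {c : C // wtb b (c : ZMod (d + b) → F) = w} := ⟨fun ⟨c, hc⟩ => by
    rcases wtb_trichotomy hb hd hmin c.2 with h | h | h <;> omega⟩
  exact Nat.card_of_isEmpty

variable [Fintype F]

lemma card_vanishes_cyclicWindow (hd : 0 < d) (hk : Module.finrank F C = b + 1)
    (hmin : ∀ c ∈ C, c ≠ 0 → d ≤ hammingNorm c) (i : ZMod (d + b)) :
    Nat.card {c : C // ∀ k ∈ cyclicWindow b i, (c : ZMod (d + b) → F) k = 0} =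
      Fintype.card F := by
  rw [Nat.card_congr (Equiv.subtypeEquivRight fun c => mem_vanishingSubmodule.symm)]
  have hlower : 1 ≤ Module.finrank F (vanishingSubmodule C (cyclicWindow b i)) := by
    have := finrank_le_finrank_vanishingSubmodule_add_card (C := C) (cyclicWindow b i)
    rw [hk, card_cyclicWindow (by omega)] at this
    omega
  -- a codeword vanishing on the window is determined by its next coordinate
  have hupper : Module.finrank F (vanishingSubmodule C (cyclicWindow b i)) ≤ 1 := by
    let f : vanishingSubmodule C (cyclicWindow b i) →ₗ[F] F :=
      (LinearMap.proj (i + b)).comp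
        (C.subtype.comp (vanishingSubmodule C (cyclicWindow b i)).subtype)
    have hf : Function.Injective f := by
      refine (injective_iff_map_eq_zero (G := vanishingSubmodule C (cyclicWindow b i)) f).2
        fun v hv => ?_
      have hv0 : ((v : C) : ZMod (d + b) → F) = 0 := by
        refine eq_zero_of_vanishes_cyclicWindow_succ hd hmin (v : C).2 (i := i) ?_
        rw [cyclicWindow_succ]
        exact forall_mem_insert _ _ _ |>.2 ⟨hv, mem_vanishingSubmodule.1 v.2⟩
      simpa using hv0
    simpa using LinearMap.finrank_le_finrank_of_injective hf
  rw [Module.natCard_eq_pow_finrank (K := F) (V := vanishingSubmodule C (cyclicWindow b i)),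
    le_antisymm hupper hlower, pow_one, Nat.card_eq_fintype_card]

lemma card_wtb_eq_of_add_one_eq (hb : 0 < b) (hd : 0 < d) (hk : Module.finrank F C = b + 1)
    (hmin : ∀ c ∈ C, c ≠ 0 → d ≤ hammingNorm c) {w : ℕ} (hw : w + 1 = d + b) :
    Nat.card {c : C // wtb b (c : ZMod (d + b) → F) = w} = (d + b) * (Fintype.card F - 1) := by
  classical
  have hfiber (i : ZMod (d + b)) :
      #(({c : C | ∀ k ∈ cyclicWindow b i, c.1 k = 0} : Finset C).erase 0) =
        Fintype.card F - 1 := by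
    rw [card_erase_of_mem (by simp), ← Fintype.card_subtype, ← Nat.card_eq_fintype_card,
      card_vanishes_cyclicWindow hd hk hmin i]
  have hunion : ({c : C | wtb b c.1 = w} : Finset C) = univ.biUnion
      fun i => ({c : C | ∀ k ∈ cyclicWindow b i, c.1 k = 0} : Finset C).erase 0 := by
    ext c
    have hiff := wtb_add_one_eq_iff hb hd hmin c.2
    simp only [mem_filter, mem_univ, true_and, mem_biUnion, mem_erase, ne_eq,
      ZeroMemClass.coe_eq_zero] at hiff ⊢
    constructor
    · intro hc
      obtain ⟨hc0, i, hi⟩ := hiff.1 (by omega)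
      exact ⟨i, hc0, hi⟩
    · rintro ⟨i, hc0, hi⟩
      have := hiff.2 ⟨hc0, i, hi⟩
      omega
  rw [Nat.card_eq_fintype_card, Fintype.card_subtype, hunion, card_biUnion]
  · simp only [hfiber, sum_const, card_univ, ZMod.card, smul_eq_mul]
  · intro i _ j _ hij
    refine disjoint_left.2 fun c hci hcj => hij ?_
    simp only [mem_erase, mem_filter, mem_univ, true_and, ne_eq] at hci hcj
    exact eq_of_vanishes_cyclicWindow hb hd hmin c.2 (by simpa using hci.1) hci.2 hcj.2

lemma card_wtb_partition (hb : 0 < b) (hd : 0 < d) (hk : Module.finrank F C = b + 1)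
    (hmin : ∀ c ∈ C, c ≠ 0 → d ≤ hammingNorm c) {w : ℕ} (hw : w + 1 = d + b) :
    Nat.card {c : C // wtb b (c : ZMod (d + b) → F) = 0} +
      Nat.card {c : C // wtb b (c : ZMod (d + b) → F) = w} +
      Nat.card {c : C // wtb b (c : ZMod (d + b) → F) = d + b} = Fintype.card F ^ (b + 1) := by
  classical
  have htotal : Nat.card C = Fintype.card F ^ (b + 1) := by
    rw [Module.natCard_eq_pow_finrank (K := F), hk, Nat.card_eq_fintype_card]
  have hmaps : Set.MapsTo (fun c : C => wtb b (c : ZMod (d + b) → F)) (univ : Finset C)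
      ({0, w, d + b} : Finset ℕ) := fun c _ => by
    have := wtb_trichotomy hb hd hmin c.2
    simp only [coe_insert, coe_singleton, Set.mem_insert_iff, Set.mem_singleton_iff]
    omega
  rw [← htotal, Nat.card_eq_fintype_card (α := C), ← card_univ,
    card_eq_sum_card_fiberwise hmaps, sum_insert (by simp; omega), sum_insert (by simp; omega),
    sum_singleton]
  simp only [Nat.card_eq_fintype_card, Fintype.card_subtype]
  ring

end MDS

theorem mds_three_weight_distribution_general
    {F : Type*} [Field F] [Fintype F] [DecidableEq F]
    (d : ℕ) (hd : 3 ≤ d)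
    (C : Submodule F (ZMod (d + 3) → F))
    (hk : Module.finrank F C = 4)
    (hmin : ∀ c ∈ C, c ≠ 0 → d ≤ hammingNorm c) :
    Nat.card {c : C // wtb 3 (c : ZMod (d + 3) → F) = 0} = 1 ∧
    (∀ w, 1 ≤ w → w ≤ d + 1 →
      Nat.card {c : C // wtb 3 (c : ZMod (d + 3) → F) = w} = 0) ∧
    Nat.card {c : C // wtb 3 (c : ZMod (d + 3) → F) = d + 2} =
      (d + 3) * (Fintype.card F - 1) ∧
    (Nat.card {c : C // wtb 3 (c : ZMod (d + 3) → F) = d + 3} : ℤ) =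
      (Fintype.card F : ℤ) ^ 4 - (d + 3) * (Fintype.card F : ℤ) + d + 2 ∧
    (1 : ℤ) + (d + 3) * ((Fintype.card F : ℤ) - 1) +
        ((Fintype.card F : ℤ) ^ 4 - (d + 3) * (Fintype.card F : ℤ) + d + 2) =
      (Fintype.card F : ℤ) ^ 4 := by
  have hd₀ : 0 < d := by omega
  have hA₀ := card_wtb_eq_zero (b := 3) (by norm_num) C
  have hA₂ := card_wtb_eq_of_add_one_eq (by norm_num) hd₀ hk hmin (w := d + 2) rfl
  have hpartition := card_wtb_partition (by norm_num) hd₀ hk hmin (w := d + 2) rfl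
  rw [hA₀, hA₂] at hpartition
  refine ⟨hA₀, fun w hw₁ hw₂ =>
    card_wtb_eq_zero_of_pos_of_lt (by norm_num) hd₀ hmin hw₁ (by omega), hA₂, ?_, by ring⟩
  have hq : 1 ≤ Fintype.card F := Fintype.card_pos
  generalize Nat.card {c : C // wtb 3 (c : ZMod (d + 3) → F) = d + 3} = A₃ at hpartition ⊢
  zify [hq] at hpartition
  norm_num at hpartition
  linarith

/-- The full `3`-weight distribution of a `[d+3, 4, d]` MDS code over `F_q` with
`d ≥ 3`:  `A^3(0) = 1`, `A^3(w) = 0` for `1 ≤ w ≤ d+1`, `A^3(d+2) = (d+3)(q-1)`,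
`A^3(d+3) = q^4 - (d+3)q + d + 2`; these values sum to `q^4`. -/
theorem mds_three_weight_distribution
    {F : Type*} [Field F] [Fintype F] [DecidableEq F]
    (d : ℕ) (hd : 3 ≤ d) [NeZero (d + 3)]
    (C : Submodule F (ZMod (d + 3) → F))
    (hk : Module.finrank F C = 4)
    (hmin : ∀ c ∈ C, c ≠ 0 → d ≤ hammingNorm c)
    (hex : ∃ c ∈ C, c ≠ 0 ∧ hammingNorm c = d) :
    Nat.card {c : C // wtb 3 (c : ZMod (d + 3) → F) = 0} = 1 ∧
    (∀ w, 1 ≤ w → w ≤ d + 1 →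
      Nat.card {c : C // wtb 3 (c : ZMod (d + 3) → F) = w} = 0) ∧
    Nat.card {c : C // wtb 3 (c : ZMod (d + 3) → F) = d + 2} =
      (d + 3) * (Fintype.card F - 1) ∧
    (Nat.card {c : C // wtb 3 (c : ZMod (d + 3) → F) = d + 3} : ℤ) =
      (Fintype.card F : ℤ) ^ 4 - (d + 3) * (Fintype.card F : ℤ) + d + 2 ∧
    (1 : ℤ) + (d + 3) * ((Fintype.card F : ℤ) - 1) +
        ((Fintype.card F : ℤ) ^ 4 - (d + 3) * (Fintype.card F : ℤ) + d + 2) =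
      (Fintype.card F : ℤ) ^ 4 :=
  mds_three_weight_distribution_general d hd C hk hmin
end
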